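/- If T is a semistandard Young tableau with all entries at most m, then T and ε_m(T) have the same shape, where ε_m(T) = P(RC_m(rw(T))) is the m-evacuation of T. -/

import Mathlib

namespace Plactic

/-- Insert `x` into a weakly increasing row, returning the new row and the bumped entry. -/
def rowInsert (x : ℕ) : List ℕ → List ℕ × Option ℕ
  | [] => ([x], none)
  | y :: ys =>
    if x < y then (x :: ys, some y)
    else
      let p := rowInsert x ys
      (y :: p.1, p.2)

/-- RSK insertion of `x` into a tableau given as a list of rows. -/
def tInsert (x : ℕ) : List (List ℕ) → List (List ℕ)
  | [] => [[x]]
  | r :: rs =>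
    match rowInsert x r with
    | (r', none) => r' :: rs
    | (r', some y) => r' :: tInsert y rs

/-- The RSK insertion tableau of a word. -/
def P (w : List ℕ) : List (List ℕ) := w.foldl (fun t x => tInsert x t) []

/-- The `i`-th row (0-indexed) of the insertion tableau of `w`. -/
def row (w : List ℕ) (i : ℕ) : List ℕ := (P w).getD i []

/-- The `j`-th column (0-indexed) of a tableau, read top to bottom. -/
def col (T : List (List ℕ)) (j : ℕ) : List ℕ := T.filterMap (fun r => r[j]?)

/-- An elementary Knuth transposition. -/
inductive KStep : List ℕ → List ℕ → Prop
  | k1 (x y : List ℕ) (a b c : ℕ) : a ≤ b → b < c →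
      KStep (x ++ [a, c, b] ++ y) (x ++ [c, a, b] ++ y)
  | k2 (x y : List ℕ) (a b c : ℕ) : a < b → b ≤ c →
      KStep (x ++ [b, a, c] ++ y) (x ++ [b, c, a] ++ y)

/-- Knuth equivalence: the equivalence relation generated by Knuth transpositions. -/
def KEquiv : List ℕ → List ℕ → Prop := Relation.EqvGen KStep

/-- The centralizer of `u` in the plactic monoid. -/
def Cent (u : List ℕ) : Set (List ℕ) := {w | KEquiv (u ++ w) (w ++ u)}

end Plactic

namespace Plactic

/-- A list of rows is a semistandard Young tableau: nonempty weakly increasing rows of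
weakly decreasing lengths, with strictly increasing columns. -/
def IsSSYT (T : List (List ℕ)) : Prop :=
  (∀ r ∈ T, List.Pairwise (· ≤ ·) r) ∧
  (∀ i, (T.getD (i + 1) []).length ≤ (T.getD i []).length) ∧
  (∀ (i j : ℕ) (x y : ℕ), (T.getD i [])[j]? = some x → (T.getD (i + 1) [])[j]? = some y → x < y) ∧
  (∀ r ∈ T, r ≠ [])

/-- The row reading word of a tableau: rows left to right, bottom row first. -/
def rowWord (T : List (List ℕ)) : List ℕ := T.reverse.flatten

/-- The `m`-reverse complement of a word. -/
def RC (m : ℕ) (w : List ℕ) : List ℕ := (w.map (fun x => m - x + 1)).reverse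

/-- The `m`-evacuation of a tableau. -/
def evac (m : ℕ) (T : List (List ℕ)) : List (List ℕ) := P (RC m (rowWord T))

end Plactic

/-!
By Greene's theorem, the shape `λ` of a tableau is determined by the numbers
`∑ᵢ min k λᵢ = λ'₁ + ⋯ + λ'ₖ`, the largest total length of `k` disjoint strictly decreasing
subsequences of its row word: the columns realise this value, and a weakly increasing row meets
each strictly decreasing subsequence at most once. These numbers are invariant under Knuth moves
(by an explicit recolouring of the subsequences) and under the reverse complement, which reverses
the word and the order of its letters and so maps strictly decreasing subsequences to strictly
decreasing subsequences. As `rw (P w)` is Knuth equivalent to `w`, the row words of `T` and of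
`ε_m(T) = P (RC_m (rw T))` have the same numbers for every `k`, so `T` and `ε_m(T)` have the same
shape.
-/

namespace Plactic

theorem KEquiv.refl (w : List ℕ) : KEquiv w w := Relation.EqvGen.refl w

theorem KEquiv.symm {w w' : List ℕ} : KEquiv w w' → KEquiv w' w := Relation.EqvGen.symm w w'

theorem KEquiv.trans {w w' w'' : List ℕ} : KEquiv w w' → KEquiv w' w'' → KEquiv w w'' :=
  Relation.EqvGen.trans w w' w''

instance : Trans KEquiv KEquiv KEquiv := ⟨KEquiv.trans⟩

theorem KStep.kEquiv {w w' : List ℕ} (h : KStep w w') : KEquiv w w' := Relation.EqvGen.rel w w' h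

theorem KEquiv.map {f : List ℕ → List ℕ} (hf : ∀ w w', KStep w w' → KStep (f w) (f w'))
    {w w' : List ℕ} (h : KEquiv w w') : KEquiv (f w) (f w') := by
  induction h with
  | rel _ _ h => exact (hf _ _ h).kEquiv
  | refl => exact .refl _
  | symm _ _ _ ih => exact ih.symm
  | trans _ _ _ _ _ ih₁ ih₂ => exact ih₁.trans ih₂

theorem KEquiv.append_left {w w' : List ℕ} (z : List ℕ) (h : KEquiv w w') :
    KEquiv (z ++ w) (z ++ w') := by
  refine h.map (f := (z ++ ·)) fun w w' hw => ?_
  cases hw with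
  | k1 x y a b c hab hbc => simpa using KStep.k1 (z ++ x) y a b c hab hbc
  | k2 x y a b c hab hbc => simpa using KStep.k2 (z ++ x) y a b c hab hbc

theorem KEquiv.append_right {w w' : List ℕ} (z : List ℕ) (h : KEquiv w w') :
    KEquiv (w ++ z) (w' ++ z) := by
  refine h.map (f := (· ++ z)) fun w w' hw => ?_
  cases hw with
  | k1 x y a b c hab hbc => simpa using KStep.k1 x (y ++ z) a b c hab hbc
  | k2 x y a b c hab hbc => simpa using KStep.k2 x (y ++ z) a b c hab hbc

theorem KEquiv.cons {w w' : List ℕ} (a : ℕ) (h : KEquiv w w') : KEquiv (a :: w) (a :: w') :=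
  h.append_left [a]

theorem kEquiv_cons_append_cons {u : List ℕ} {x z : ℕ} (hu : u.Pairwise (· ≤ ·))
    (hux : ∀ t ∈ u, t ≤ x) (hxz : x < z) (v : List ℕ) :
    KEquiv (z :: (u ++ x :: v)) (u ++ z :: x :: v) := by
  induction u with
  | nil => exact .refl _
  | cons a u ih =>
    obtain ⟨hau, hu⟩ := List.pairwise_cons.1 hu
    have hswap : ∀ b w, a ≤ b → b < z → KEquiv (z :: a :: b :: w) (a :: z :: b :: w) :=
      fun b w hab hbz => (by simpa using KStep.k1 [] w a b z hab hbz : KStep _ _).kEquiv.symm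
    have hfront : KEquiv (z :: a :: (u ++ x :: v)) (a :: z :: (u ++ x :: v)) := by
      cases u with
      | nil => exact hswap x v (hux a (by simp)) hxz
      | cons b u => exact hswap b _ (hau b (by simp)) ((hux b (by simp)).trans_lt hxz)
    exact hfront.trans ((ih hu fun t ht => hux t (by simp [ht])).cons a)

theorem kEquiv_cons_cons_append {v : List ℕ} {x c : ℕ} (hv : (c :: v).Pairwise (· ≤ ·))
    (hxc : x < c) : KEquiv (c :: x :: v) (c :: v ++ [x]) := by
  induction v generalizing c with
  | nil => exact .refl _
  | cons d v ih =>
    obtain ⟨hcd, hv⟩ := List.pairwise_cons.1 hv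
    have hcd : c ≤ d := hcd d (by simp)
    calc KEquiv (c :: x :: d :: v) (c :: d :: x :: v) := by
          simpa using (KStep.k2 [] v x c d hxc hcd).kEquiv
      KEquiv _ (c :: (d :: v ++ [x])) := (ih hv (hxc.trans_le hcd)).cons c

/-- Inserting `x` into the row `u ++ z :: v` bumps `z`. -/
theorem kEquiv_rowBump {u v : List ℕ} {x z : ℕ} (hr : (u ++ z :: v).Pairwise (· ≤ ·))
    (hux : ∀ t ∈ u, t ≤ x) (hxz : x < z) :
    KEquiv (u ++ z :: v ++ [x]) (z :: (u ++ x :: v)) := by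
  obtain ⟨hu, hzv, -⟩ := List.pairwise_append.1 hr
  calc KEquiv (u ++ z :: v ++ [x]) (u ++ z :: x :: v) := by
        simpa using ((kEquiv_cons_cons_append hzv hxz).symm.append_left u)
    KEquiv _ (z :: (u ++ x :: v)) := (kEquiv_cons_append_cons hu hux hxz v).symm

inductive RowInsertSpec (x : ℕ) : List ℕ → List ℕ × Option ℕ → Prop
  | append (r : List ℕ) (hr : ∀ t ∈ r, t ≤ x) : RowInsertSpec x r (r ++ [x], none)
  | bump (u v : List ℕ) (z : ℕ) (hu : ∀ t ∈ u, t ≤ x) (hxz : x < z) :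
      RowInsertSpec x (u ++ z :: v) (u ++ x :: v, some z)

theorem RowInsertSpec.cons {x y : ℕ} {r : List ℕ} {p : List ℕ × Option ℕ} (hyx : y ≤ x)
    (h : RowInsertSpec x r p) : RowInsertSpec x (y :: r) (y :: p.1, p.2) := by
  cases h with
  | append r hr => simpa using RowInsertSpec.append (y :: r) (by simpa [hyx] using hr)
  | bump u v z hu hxz => simpa using RowInsertSpec.bump (y :: u) v z (by simpa [hyx] using hu) hxz

theorem rowInsert_spec (x : ℕ) (r : List ℕ) : RowInsertSpec x r (rowInsert x r) := by
  induction r with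
  | nil => exact RowInsertSpec.append [] (by simp)
  | cons y r ih =>
    by_cases hxy : x < y
    · simpa [rowInsert, hxy] using RowInsertSpec.bump [] r y (x := x) (by simp) hxy
    · simpa [rowInsert, hxy] using ih.cons (not_lt.1 hxy)

theorem RowInsertSpec.pairwise {x : ℕ} {r : List ℕ} {p : List ℕ × Option ℕ}
    (h : RowInsertSpec x r p) (hr : r.Pairwise (· ≤ ·)) : p.1.Pairwise (· ≤ ·) := by
  cases h with
  | append r hrx => simpa [List.pairwise_append] using ⟨hr, hrx⟩
  | bump u v z hu hxz =>
    simp only [List.pairwise_append, List.pairwise_cons, List.mem_cons] at hr ⊢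
    grind

theorem tInsert_cons_of_rowInsert_eq_none {x : ℕ} {r r' : List ℕ} {rs : List (List ℕ)}
    (h : rowInsert x r = (r', none)) : tInsert x (r :: rs) = r' :: rs := by
  simp [tInsert, h]

theorem tInsert_cons_of_rowInsert_eq_some {x z : ℕ} {r r' : List ℕ} {rs : List (List ℕ)}
    (h : rowInsert x r = (r', some z)) : tInsert x (r :: rs) = r' :: tInsert z rs := by
  simp [tInsert, h]

theorem headD_tInsert (x : ℕ) (T : List (List ℕ)) :
    (tInsert x T).headD [] = (rowInsert x (T.headD [])).1 := by
  cases T with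
  | nil => rfl
  | cons r rs =>
    rcases h : rowInsert x r with ⟨r', _ | z⟩
    · simp [tInsert_cons_of_rowInsert_eq_none h, h]
    · simp [tInsert_cons_of_rowInsert_eq_some h, h]

theorem rowWord_cons (r : List ℕ) (rs : List (List ℕ)) : rowWord (r :: rs) = rowWord rs ++ r := by
  simp [rowWord]

theorem kEquiv_rowWord_tInsert (x : ℕ) {T : List (List ℕ)} (hT : ∀ r ∈ T, r.Pairwise (· ≤ ·)) :
    KEquiv (rowWord (tInsert x T)) (rowWord T ++ [x]) := by
  induction T generalizing x with
  | nil => exact .refl _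
  | cons r rs ih =>
    have hspec := rowInsert_spec x r
    generalize hq : rowInsert x r = q at hspec
    cases hspec with
    | append _ _ => simpa [tInsert_cons_of_rowInsert_eq_none hq, rowWord_cons] using .refl _
    | bump u v z hu hxz =>
      rw [tInsert_cons_of_rowInsert_eq_some hq, rowWord_cons, rowWord_cons]
      calc KEquiv (rowWord (tInsert z rs) ++ (u ++ x :: v)) (rowWord rs ++ z :: (u ++ x :: v)) := by
            simpa using (ih z fun r hr => hT r (by simp [hr])).append_right (u ++ x :: v)
        KEquiv _ (rowWord rs ++ (u ++ z :: v) ++ [x]) := by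
          simpa using ((kEquiv_rowBump (hT _ (by simp)) hu hxz).symm.append_left (rowWord rs))

def RowBelow (r r' : List ℕ) : Prop :=
  r'.length ≤ r.length ∧ ∀ (j a b : ℕ), r[j]? = some a → r'[j]? = some b → a < b

theorem isSSYT_nil : IsSSYT [] := by
  refine ⟨by simp, fun i => ?_, fun i j x y hx _ => ?_, by simp⟩ <;> simp at *

theorem isSSYT_cons_iff {r : List ℕ} {rs : List (List ℕ)} :
    IsSSYT (r :: rs) ↔
      r.Pairwise (· ≤ ·) ∧ r ≠ [] ∧ RowBelow r (rs.headD []) ∧ IsSSYT rs := by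
  have hhead : rs.getD 0 [] = rs.headD [] := by cases rs <;> rfl
  constructor
  · rintro ⟨hs, hlen, hcol, hne⟩
    exact ⟨hs r (by simp), hne r (by simp), ⟨hhead ▸ hlen 0, hhead ▸ hcol 0⟩,
      fun r' hr' => hs r' (by simp [hr']), fun i => hlen (i + 1),
      fun i => hcol (i + 1), fun r' hr' => hne r' (by simp [hr'])⟩
  · rintro ⟨hr, hne, ⟨hlen, hcol⟩, hs, hlens, hcols, hnes⟩
    refine ⟨by simpa [hr] using hs, fun i => ?_, fun i => ?_, by simpa [hne] using hnes⟩
    · cases i with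
      | zero => exact hhead ▸ hlen
      | succ i => simpa using hlens i
    · cases i with
      | zero => exact hhead ▸ hcol
      | succ i => simpa using hcols i

theorem RowBelow.append_singleton {r r' : List ℕ} (h : RowBelow r r') (x : ℕ) :
    RowBelow (r ++ [x]) r' := by
  refine ⟨by simpa using h.1.trans (Nat.le_succ _), fun j a b ha hb => h.2 j a b ?_ hb⟩
  have hj : j < r.length := (List.getElem?_eq_some_iff.1 hb).1.trans_le h.1
  rwa [List.getElem?_append_left hj] at ha

theorem getElem?_append_cons_of_ne {u v : List ℕ} {x : ℕ} (y : ℕ) {j : ℕ} (hj : j ≠ u.length) :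
    (u ++ x :: v)[j]? = (u ++ y :: v)[j]? := by
  grind

theorem exists_getElem?_append_cons_le {u v : List ℕ} {x y j a : ℕ} (hxy : x ≤ y)
    (h : (u ++ x :: v)[j]? = some a) : ∃ b, (u ++ y :: v)[j]? = some b ∧ a ≤ b := by
  grind

theorem le_of_getElem?_append_cons {u v : List ℕ} {x j a : ℕ} (hux : ∀ t ∈ u, t ≤ x)
    (hj : j ≤ u.length) (h : (u ++ x :: v)[j]? = some a) : a ≤ x := by
  grind [List.getElem_mem]

theorem RowInsertSpec.column_le {z n : ℕ} {r : List ℕ} {p : List ℕ × Option ℕ}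
    (hp : RowInsertSpec z r p) (hgt : ∀ b, r[n]? = some b → z < b) :
    p.1.length ≤ max r.length (n + 1) ∧
      ∀ j b, p.1[j]? = some b → r[j]? = some b ∨ (j ≤ n ∧ b = z) := by
  cases hp with
  | append r hr =>
    have hshort : r.length ≤ n := by
      by_contra hlt
      exact absurd (hgt _ (List.getElem?_eq_getElem (by omega))) (not_lt.2 (hr _ (by simp)))
    refine ⟨by simp; omega, fun j b hb => ?_⟩
    grind
  | bump u v y hu hzy =>
    have hshort : u.length ≤ n := by
      by_contra hlt
      refine absurd (hgt _ ?_) (not_lt.2 (hu u[n] (by simp)))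
      rw [List.getElem?_append_left (by omega), List.getElem?_eq_getElem]
    refine ⟨by simp, fun j b hb => ?_⟩
    by_cases hj : j = u.length
    · subst hj
      simp_all
    · rw [getElem?_append_cons_of_ne y hj] at hb
      exact .inl hb

theorem RowBelow.rowBump {u v r₂ : List ℕ} {x z : ℕ} {p : List ℕ × Option ℕ}
    (h : RowBelow (u ++ z :: v) r₂) (hux : ∀ t ∈ u, t ≤ x) (hxz : x < z)
    (hp : RowInsertSpec z r₂ p) : RowBelow (u ++ x :: v) p.1 := by
  obtain ⟨hlen, hcol⟩ := h
  obtain ⟨hlen', hcol'⟩ := hp.column_le fun b => hcol u.length z b (by simp)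
  refine ⟨hlen'.trans (by simp at hlen ⊢; omega), fun j a b ha hb => ?_⟩
  rcases hcol' j b hb with hb | ⟨hj, rfl⟩
  · obtain ⟨a', ha', haa'⟩ := exists_getElem?_append_cons_le hxz.le ha
    exact haa'.trans_lt (hcol j a' b ha' hb)
  · exact (le_of_getElem?_append_cons hux hj ha).trans_lt hxz

theorem isSSYT_tInsert (x : ℕ) {T : List (List ℕ)} (hT : IsSSYT T) : IsSSYT (tInsert x T) := by
  induction T generalizing x with
  | nil => exact isSSYT_cons_iff.2 ⟨by simp, by simp, ⟨by simp, by simp⟩, isSSYT_nil⟩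
  | cons r rs ih =>
    obtain ⟨hr, -, hbelow, hrs⟩ := isSSYT_cons_iff.1 hT
    have hspec := rowInsert_spec x r
    generalize hq : rowInsert x r = q at hspec
    have hsorted := hspec.pairwise hr
    cases hspec with
    | append _ _ =>
      rw [tInsert_cons_of_rowInsert_eq_none hq]
      exact isSSYT_cons_iff.2 ⟨hsorted, by simp, hbelow.append_singleton x, hrs⟩
    | bump u v z hu hxz =>
      rw [tInsert_cons_of_rowInsert_eq_some hq]
      refine isSSYT_cons_iff.2 ⟨hsorted, by simp, ?_, ih z hrs⟩
      rw [headD_tInsert]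
      exact hbelow.rowBump hu hxz (rowInsert_spec _ _)

theorem P_append_singleton (w : List ℕ) (x : ℕ) : P (w ++ [x]) = tInsert x (P w) := by
  simp [P]

theorem isSSYT_P (w : List ℕ) : IsSSYT (P w) := by
  induction w using List.reverseRecOn with
  | nil => exact isSSYT_nil
  | append_singleton w x ih => simpa [P_append_singleton] using isSSYT_tInsert x ih

theorem kEquiv_rowWord_P (w : List ℕ) : KEquiv (rowWord (P w)) w := by
  induction w using List.reverseRecOn with
  | nil => exact .refl _
  | append_singleton w x ih =>
    rw [P_append_singleton]
    exact (kEquiv_rowWord_tInsert x (isSSYT_P w).1).trans (ih.append_right [x])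


theorem isChain_gt_cons_of_le {α : Type*} [Preorder α] {a b : α} {l : List α} (hab : a ≤ b)
    (h : (a :: l).IsChain (· > ·)) : (b :: l).IsChain (· > ·) := by
  cases l with
  | nil => simp
  | cons c l =>
    rw [List.isChain_cons_cons] at h ⊢
    exact ⟨h.1.trans_le hab, h.2⟩

theorem isChain_gt_append_singleton_of_le {α : Type*} [Preorder α] {a b : α} {l : List α}
    (hab : a ≤ b) (h : (l ++ [b]).IsChain (· > ·)) : (l ++ [a]).IsChain (· > ·) := by
  rw [List.isChain_append] at h ⊢
  exact ⟨h.1, by simp, fun x hx y hy => (h.2.2 x hx b (by simp)).trans_le' (by simp_all)⟩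

section Coloring

variable {ι : Type*}

def numColored (cw : List (ℕ × Option ι)) : ℕ := cw.countP (·.2.isSome)

@[simp] theorem numColored_nil : numColored ([] : List (ℕ × Option ι)) = 0 := rfl

@[simp] theorem numColored_cons (a : ℕ) (o : Option ι) (cw : List (ℕ × Option ι)) :
    numColored ((a, o) :: cw) = numColored cw + if o.isSome then 1 else 0 := by
  simp [numColored, List.countP_cons]

@[simp] theorem numColored_append (cw cw' : List (ℕ × Option ι)) :
    numColored (cw ++ cw') = numColored cw + numColored cw' := by
  simp [numColored]

@[simp] theorem numColored_flatten (L : List (List (ℕ × Option ι))) :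
    numColored L.flatten = (L.map numColored).sum :=
  List.countP_flatten

theorem numColored_swap (cw₁ cw₂ : List (ℕ × Option ι)) (a b : ℕ) (o₁ o₂ : Option ι) :
    numColored (cw₁ ++ (b, o₂) :: (a, o₁) :: cw₂) =
      numColored (cw₁ ++ (a, o₁) :: (b, o₂) :: cw₂) := by
  simp only [numColored_append, numColored_cons]
  omega

def recolor (σ : Equiv.Perm ι) (cw : List (ℕ × Option ι)) : List (ℕ × Option ι) :=
  cw.map fun p => (p.1, p.2.map σ)

@[simp] theorem map_fst_recolor (σ : Equiv.Perm ι) (cw : List (ℕ × Option ι)) :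
    (recolor σ cw).map Prod.fst = cw.map Prod.fst := by
  simp [recolor, Function.comp_def]

@[simp] theorem numColored_recolor (σ : Equiv.Perm ι) (cw : List (ℕ × Option ι)) :
    numColored (recolor σ cw) = numColored cw := by
  simp [numColored, recolor, List.countP_map, Function.comp_def]

theorem exists_eq_cons_of_map_fst_eq {cw : List (ℕ × Option ι)} {y : List ℕ} {a : ℕ}
    (h : cw.map Prod.fst = a :: y) : ∃ o cw', cw = (a, o) :: cw' ∧ cw'.map Prod.fst = y := by
  obtain ⟨⟨_, o⟩, cw', rfl, rfl, rfl⟩ := List.map_eq_cons_iff.1 h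
  exact ⟨o, cw', rfl, rfl⟩

theorem exists_eq_append_cons_of_map_fst_eq {cw : List (ℕ × Option ι)} {x y : List ℕ} {a : ℕ}
    (h : cw.map Prod.fst = x ++ a :: y) :
    ∃ cw₁ o cw₂, cw = cw₁ ++ (a, o) :: cw₂ ∧ cw₁.map Prod.fst = x ∧ cw₂.map Prod.fst = y := by
  obtain ⟨cw₁, cw', rfl, rfl, h'⟩ := List.map_eq_append_iff.1 h
  obtain ⟨o, cw₂, rfl, rfl⟩ := exists_eq_cons_of_map_fst_eq h'
  exact ⟨cw₁, o, cw₂, rfl, rfl, rfl⟩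

variable [DecidableEq ι]

/-- In a coloured word the colour `none` marks an uncoloured letter. -/
def colorClass (cw : List (ℕ × Option ι)) (j : ι) : List ℕ :=
  (cw.filter (·.2 = some j)).map Prod.fst

/-- `w` has disjoint strictly decreasing subsequences, indexed by `ι`, of total length `s`:
the colour classes of a colouring of `w`. -/
def HasDecCover (ι : Type*) [DecidableEq ι] (s : ℕ) (w : List ℕ) : Prop :=
  ∃ cw : List (ℕ × Option ι), cw.map Prod.fst = w ∧
    (∀ j, (colorClass cw j).IsChain (· > ·)) ∧ numColored cw = s

@[simp] theorem colorClass_nil (j : ι) : colorClass ([] : List (ℕ × Option ι)) j = [] := rfl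

@[simp] theorem colorClass_cons (a : ℕ) (o : Option ι) (cw : List (ℕ × Option ι)) (j : ι) :
    colorClass ((a, o) :: cw) j = if o = some j then a :: colorClass cw j else colorClass cw j := by
  by_cases h : o = some j <;> simp [colorClass, h]

@[simp] theorem colorClass_append (cw cw' : List (ℕ × Option ι)) (j : ι) :
    colorClass (cw ++ cw') j = colorClass cw j ++ colorClass cw' j := by
  simp [colorClass]

@[simp] theorem colorClass_flatten (L : List (List (ℕ × Option ι))) (j : ι) :
    colorClass L.flatten j = (L.map (colorClass · j)).flatten := by
  induction L <;> simp [*]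

@[simp] theorem colorClass_recolor (σ : Equiv.Perm ι) (cw : List (ℕ × Option ι)) (j : ι) :
    colorClass (recolor σ cw) j = colorClass cw (σ.symm j) := by
  induction cw with
  | nil => rfl
  | cons p cw ih =>
    obtain ⟨a, o⟩ := p
    have : (o.map σ = some j) ↔ o = some (σ.symm j) := by
      cases o <;> simp [Equiv.eq_symm_apply]
    simp only [recolor, List.map_cons] at ih ⊢
    simp [ih, this]

theorem colorClass_sublist (cw : List (ℕ × Option ι)) (j : ι) :
    (colorClass cw j).Sublist (cw.map Prod.fst) :=
  (List.filter_sublist).map _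

theorem colorClass_swap (cw₁ cw₂ : List (ℕ × Option ι)) {a b : ℕ} {o₁ o₂ : Option ι}
    (hne : ∀ j, ¬(o₁ = some j ∧ o₂ = some j)) (j : ι) :
    colorClass (cw₁ ++ (b, o₂) :: (a, o₁) :: cw₂) j =
      colorClass (cw₁ ++ (a, o₁) :: (b, o₂) :: cw₂) j := by
  have := hne j
  simp only [colorClass_append, colorClass_cons]
  split_ifs <;> simp_all

/-- A letter `a` never shares its colour with a following letter `b ≥ a`, so the two can be
exchanged without changing any colour class. -/
theorem HasDecCover.swap_of_le {s a b : ℕ} {x y : List ℕ} (hab : a ≤ b)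
    (h : HasDecCover ι s (x ++ a :: b :: y)) : HasDecCover ι s (x ++ b :: a :: y) := by
  obtain ⟨cw, hw, hdec, rfl⟩ := h
  obtain ⟨cw₁, o₁, cw', rfl, rfl, hw'⟩ := exists_eq_append_cons_of_map_fst_eq hw
  obtain ⟨o₂, cw₂, rfl, rfl⟩ := exists_eq_cons_of_map_fst_eq hw'
  have hne : ∀ j, ¬(o₁ = some j ∧ o₂ = some j) := by
    rintro j ⟨rfl, rfl⟩
    have := hdec j
    simp [List.isChain_append_cons_cons] at this
    omega
  exact ⟨cw₁ ++ (b, o₂) :: (a, o₁) :: cw₂, by simp,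
    fun j => colorClass_swap cw₁ cw₂ hne j ▸ hdec j, numColored_swap _ _ _ _ _ _⟩

/-- When `c` and `a` share the colour `j₁`, the letter `b` can join that colour class in place of
`a`, while `a` takes over the colour of `b`; if `b` had a colour `j₂`, the colours `j₁` and `j₂`
are exchanged on the rest of the word so that the tails of the two classes also change places. -/
theorem exists_recoloring_of_le_of_lt {a b c : ℕ} {j₁ : ι} {o : Option ι}
    {cw₁ cw₂ : List (ℕ × Option ι)} (hab : a ≤ b) (hbc : b < c)
    (hdec : ∀ j, (colorClass (cw₁ ++ (c, some j₁) :: (a, some j₁) :: (b, o) :: cw₂) j).IsChain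
      (· > ·)) :
    ∃ cw₂' : List (ℕ × Option ι), cw₂'.map Prod.fst = cw₂.map Prod.fst ∧
      numColored cw₂' = numColored cw₂ ∧
      ∀ j, (colorClass (cw₁ ++ (a, o) :: (c, some j₁) :: (b, some j₁) :: cw₂') j).IsChain
        (· > ·) := by
  have h₁ := hdec j₁
  have ho : o ≠ some j₁ := by
    rintro rfl
    simp at h₁
    omega
  cases o with
  | none =>
    refine ⟨cw₂, rfl, rfl, fun j => ?_⟩
    by_cases hj : j = j₁
    · subst hj
      simp [List.isChain_append_cons_cons] at h₁ ⊢
      exact ⟨h₁.1, hbc, isChain_gt_cons_of_le hab h₁.2.2⟩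
    · simpa [hj, Ne.symm hj] using hdec j
  | some j₂ =>
    have hj₂ : j₂ ≠ j₁ := fun h => ho (h ▸ rfl)
    refine ⟨recolor (Equiv.swap j₁ j₂) cw₂, by simp, by simp, fun j => ?_⟩
    have h₂ := hdec j₂
    simp only [colorClass_append, colorClass_cons, hj₂, hj₂.symm, Option.some.injEq, if_true,
      if_false, List.isChain_append_cons_cons] at h₁ h₂
    rw [List.isChain_split] at h₂
    rcases eq_or_ne j j₁ with rfl | hj₁
    · simpa [hj₂] using ⟨h₁.1, hbc, h₂.2⟩
    rcases eq_or_ne j j₂ with rfl | hj₂'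
    · simp only [colorClass_append, colorClass_cons, colorClass_recolor, hj₂.symm,
        Option.some.injEq, if_true, if_false, Equiv.symm_swap, Equiv.swap_apply_right]
      rw [List.isChain_split]
      exact ⟨isChain_gt_append_singleton_of_le hab h₂.1, h₁.2.2⟩
    · simpa [hj₁, hj₂', Ne.symm hj₁, Ne.symm hj₂', Equiv.swap_apply_of_ne_of_ne] using hdec j

theorem HasDecCover.swap_of_le_of_lt {s a b c : ℕ} {x y : List ℕ} (hab : a ≤ b) (hbc : b < c)
    (h : HasDecCover ι s (x ++ c :: a :: b :: y)) : HasDecCover ι s (x ++ a :: c :: b :: y) := by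
  obtain ⟨cw, hw, hdec, rfl⟩ := h
  obtain ⟨cw₁, o₁, cw', rfl, rfl, hw'⟩ := exists_eq_append_cons_of_map_fst_eq hw
  obtain ⟨o₂, cw'', rfl, hw''⟩ := exists_eq_cons_of_map_fst_eq hw'
  obtain ⟨o₃, cw₂, rfl, rfl⟩ := exists_eq_cons_of_map_fst_eq hw''
  by_cases hne : ∀ j, ¬(o₁ = some j ∧ o₂ = some j)
  · exact ⟨cw₁ ++ (a, o₂) :: (c, o₁) :: (b, o₃) :: cw₂, by simp,
      fun j => colorClass_swap cw₁ _ hne j ▸ hdec j, numColored_swap _ _ _ _ _ _⟩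
  push Not at hne
  obtain ⟨j₁, rfl, rfl⟩ := hne
  obtain ⟨cw₂', hw₂', hnum, hdec'⟩ := exists_recoloring_of_le_of_lt hab hbc hdec
  refine ⟨cw₁ ++ (a, o₃) :: (c, some j₁) :: (b, some j₁) :: cw₂', by simp [hw₂'], hdec', ?_⟩
  simp only [numColored_append, numColored_cons, hnum, Option.isSome_some, if_true]
  omega

theorem HasDecCover.reverse_map {s : ℕ} {w : List ℕ} {f : ℕ → ℕ}
    (hf : ∀ a ∈ w, ∀ b ∈ w, a < b → f b < f a) (h : HasDecCover ι s w) :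
    HasDecCover ι s (w.map f).reverse := by
  obtain ⟨cw, rfl, hdec, rfl⟩ := h
  refine ⟨(cw.map fun p => (f p.1, p.2)).reverse, by simp [Function.comp_def], fun j => ?_,
    by simp [numColored, List.countP_map, Function.comp_def]⟩
  have hclass : colorClass (cw.map fun p => (f p.1, p.2)).reverse j =
      ((colorClass cw j).map f).reverse := by
    simp [colorClass, List.filter_reverse, List.filter_map, Function.comp_def]
  rw [hclass, List.isChain_reverse, List.isChain_map]
  have hsub := (colorClass_sublist cw j).subset
  exact (hdec j).imp_of_mem_imp fun a b ha hb hab => hf b (hsub hb) a (hsub ha) hab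

theorem hasDecCover_RC_iff {s m : ℕ} {w : List ℕ} (hw : ∀ t ∈ w, t ≤ m) :
    HasDecCover ι s (RC m w) ↔ HasDecCover ι s w := by
  refine ⟨fun h => ?_, fun h => h.reverse_map fun a ha b hb hab => by grind⟩
  have hw' : ((RC m w).map fun u => m + 1 - u).reverse = w := by
    simp only [RC, List.map_reverse, List.map_map, List.reverse_reverse]
    exact List.map_congr_left (fun t ht => by grind) |>.trans w.map_id
  rw [← hw']
  exact h.reverse_map fun a ha b hb hab => by simp [RC] at ha hb; grind

theorem HasDecCover.iff_of_k1 {s a b c : ℕ} {x y : List ℕ} (hab : a ≤ b) (hbc : b < c) :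
    HasDecCover ι s (x ++ [a, c, b] ++ y) ↔ HasDecCover ι s (x ++ [c, a, b] ++ y) := by
  simp only [List.append_assoc, List.cons_append, List.nil_append]
  exact ⟨swap_of_le (hab.trans hbc.le), swap_of_le_of_lt hab hbc⟩

/-- The `m`-reverse complement turns the Knuth relations of the second kind into ones of the
first kind. -/
theorem HasDecCover.iff_of_kStep {s : ℕ} {w w' : List ℕ} (h : KStep w w') :
    HasDecCover ι s w ↔ HasDecCover ι s w' := by
  cases h with
  | k1 x y a b c hab hbc => exact iff_of_k1 hab hbc
  | k2 x y a b c hab hbc =>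
    set m := (x ++ [b, a, c] ++ y).sum
    have hw : ∀ t ∈ x ++ [b, a, c] ++ y, t ≤ m := fun _ ht => List.le_sum_of_mem ht
    have hw' : ∀ t ∈ x ++ [b, c, a] ++ y, t ≤ m := fun t ht => hw t (by simp at ht ⊢; tauto)
    rw [← hasDecCover_RC_iff hw, ← hasDecCover_RC_iff hw']
    simpa [RC] using iff_of_k1 (x := RC m y) (y := RC m x) (a := m - c + 1) (b := m - b + 1)
      (c := m - a + 1) (by grind) (by grind)

theorem HasDecCover.iff_of_kEquiv {s : ℕ} {w w' : List ℕ} (h : KEquiv w w') :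
    HasDecCover ι s w ↔ HasDecCover ι s w' := by
  induction h with
  | rel _ _ h => exact iff_of_kStep h
  | refl => rfl
  | symm _ _ _ ih => exact ih.symm
  | trans _ _ _ _ _ ih₁ ih₂ => exact ih₁.trans ih₂

theorem numColored_le_card [Fintype ι] {cw : List (ℕ × Option ι)}
    (hcw : (cw.map Prod.fst).Pairwise (· ≤ ·)) (hdec : ∀ j, (colorClass cw j).IsChain (· > ·)) :
    numColored cw ≤ Fintype.card ι := by
  have hnodup : (cw.filterMap Prod.snd).Nodup := by
    refine List.nodup_iff_count_le_one.2 fun j => ?_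
    have hlen : (colorClass cw j).length ≤ 1 := by
      have hle := hcw.sublist (colorClass_sublist cw j)
      match colorClass cw j, hdec j, hle with
      | [], _, _ | [_], _, _ => simp
      | a :: b :: _, hc, hl => simp at hc hl; omega
    simpa [colorClass, List.count_filterMap, List.countP_eq_length_filter,
      Bool.beq_eq_decide_eq] using hlen
  simpa [numColored, List.length_filterMap_eq_countP] using hnodup.length_le_card

theorem HasDecCover.le_sum_min_length [Fintype ι] {s : ℕ} {B : List (List ℕ)}
    (hB : ∀ b ∈ B, b.Pairwise (· ≤ ·)) (h : HasDecCover ι s B.flatten) :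
    s ≤ (B.map fun b => min (Fintype.card ι) b.length).sum := by
  induction B generalizing s with
  | nil =>
    obtain ⟨cw, hw, -, rfl⟩ := h
    simp [List.map_eq_nil_iff.1 hw]
  | cons b B ih =>
    obtain ⟨cw, hw, hdec, rfl⟩ := h
    obtain ⟨cw₁, cw₂, rfl, rfl, hw₂⟩ := List.map_eq_append_iff.1 hw
    simp only [colorClass_append] at hdec
    have hdec₁ := fun j => (hdec j).left_of_append
    have hdec₂ := fun j => (hdec j).right_of_append
    have h₁ : numColored cw₁ ≤ min (Fintype.card ι) (cw₁.map Prod.fst).length :=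
      le_min (numColored_le_card (hB _ (by simp)) hdec₁)
        (by simpa [numColored] using List.countP_le_length)
    have h₂ := ih (fun b hb => hB b (by simp [hb])) ⟨cw₂, hw₂, hdec₂, rfl⟩
    simp only [numColored_append, List.map_cons, List.sum_cons]
    omega

theorem HasDecCover.le_sum_min_length_rowWord [Fintype ι] {s : ℕ} {T : List (List ℕ)}
    (hT : ∀ r ∈ T, r.Pairwise (· ≤ ·)) (h : HasDecCover ι s (rowWord T)) :
    s ≤ (T.map fun r => min (Fintype.card ι) r.length).sum := by
  simpa [List.map_reverse] using h.le_sum_min_length (B := T.reverse) (by simpa using hT)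

end Coloring

theorem col_cons (r : List ℕ) (rs : List (List ℕ)) (j : ℕ) :
    col (r :: rs) j = r[j]?.toList ++ col rs j := by
  cases h : r[j]? <;> simp [col, h]

theorem head?_col {T : List (List ℕ)} (hT : IsSSYT T) (j : ℕ) :
    (col T j).head? = (T.headD [])[j]? := by
  induction T with
  | nil => simp [col]
  | cons r rs ih =>
    obtain ⟨-, -, ⟨hlen, -⟩, hrs⟩ := isSSYT_cons_iff.1 hT
    rw [col_cons]
    cases h : r[j]? with
    | some a => simp [h]
    | none =>
      have hj : r.length ≤ j := List.getElem?_eq_none_iff.1 h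
      simpa [ih hrs, h] using hlen.trans hj

theorem isChain_col {T : List (List ℕ)} (hT : IsSSYT T) (j : ℕ) : (col T j).IsChain (· < ·) := by
  induction T with
  | nil => simp [col]
  | cons r rs ih =>
    obtain ⟨-, -, ⟨-, hcol⟩, hrs⟩ := isSSYT_cons_iff.1 hT
    rw [col_cons]
    cases h : r[j]? with
    | none => simpa using ih hrs
    | some a =>
      rw [Option.toList_some, List.singleton_append]
      refine List.isChain_cons.2 ⟨fun b hb => hcol j a b h ?_, ih hrs⟩
      rwa [head?_col hrs] at hb

/-- The `ℕ` argument is the column of the first letter of the row. -/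
def columnColoring (k : ℕ) : ℕ → List ℕ → List (ℕ × Option (Fin k))
  | _, [] => []
  | i, a :: r => (a, if h : i < k then some ⟨i, h⟩ else none) :: columnColoring k (i + 1) r

theorem map_fst_columnColoring (k i₀ : ℕ) (r : List ℕ) :
    (columnColoring k i₀ r).map Prod.fst = r := by
  induction r generalizing i₀ with
  | nil => rfl
  | cons a r ih => simp [columnColoring, ih]

theorem numColored_columnColoring (k i₀ : ℕ) (r : List ℕ) :
    numColored (columnColoring k i₀ r) = min (k - i₀) r.length := by
  induction r generalizing i₀ with
  | nil => simp [columnColoring]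
  | cons a r ih =>
    by_cases h : i₀ < k <;> simp [columnColoring, ih, h] <;> omega

theorem colorClass_columnColoring (k i₀ : ℕ) (r : List ℕ) (j : Fin k) :
    colorClass (columnColoring k i₀ r) j = if i₀ ≤ j then r[j - i₀]?.toList else [] := by
  induction r generalizing i₀ with
  | nil => simp [columnColoring]
  | cons a r ih =>
    rcases eq_or_ne i₀ j with rfl | hne
    · simp [columnColoring, ih]
    have hcolor : ¬ ∃ h : i₀ < k, (⟨i₀, h⟩ : Fin k) = j := fun ⟨_, h⟩ => hne (by simp [← h])
    simp only [columnColoring, colorClass_cons, Option.dite_none_right_eq_some,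
      Option.some.injEq, hcolor, if_false, ih]
    rcases lt_or_gt_of_ne hne with hlt | hgt
    · rw [if_pos (Nat.succ_le_of_lt hlt), if_pos hlt.le,
        show (j : ℕ) - i₀ = j - (i₀ + 1) + 1 by omega, List.getElem?_cons_succ]
    · rw [if_neg (by omega), if_neg (by omega)]

theorem hasDecCover_rowWord {T : List (List ℕ)} (hT : IsSSYT T) (k : ℕ) :
    HasDecCover (Fin k) (T.map fun r => min k r.length).sum (rowWord T) := by
  refine ⟨(T.reverse.map (columnColoring k 0)).flatten, ?_, fun j => ?_, ?_⟩
  · simp [rowWord, List.map_flatten, Function.comp_def, map_fst_columnColoring]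
  · have hclass :
        colorClass (T.reverse.map (columnColoring k 0)).flatten j = (col T j).reverse := by
      rw [col, ← List.filterMap_reverse, List.filterMap_eq_flatMap_toList, List.flatMap_def]
      simp [Function.comp_def, colorClass_columnColoring]
    rw [hclass, List.isChain_reverse]
    exact isChain_col hT j
  · simp [numColored_columnColoring, List.map_reverse, Function.comp_def]

theorem sum_map_min_succ (l : List ℕ) (k : ℕ) :
    (l.map (min (k + 1))).sum = (l.map (min k)).sum + l.countP (k < ·) := by
  induction l with
  | nil => simp
  | cons a l ih => by_cases h : k < a <;> simp [ih, h] <;> omega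

theorem countP_lt_eq_countP_succ_lt_add_count (l : List ℕ) (k : ℕ) :
    l.countP (k < ·) = l.countP (k + 1 < ·) + l.count (k + 1) := by
  induction l with
  | nil => simp
  | cons a l ih =>
    simp only [List.countP_cons, List.count_cons, ih]
    split_ifs <;> simp_all <;> omega

theorem eq_of_sum_map_min_eq {l l' : List ℕ} (hl : l.SortedGE) (hl' : l'.SortedGE) (h0 : 0 ∉ l)
    (h0' : 0 ∉ l') (h : ∀ k, (l.map (min k)).sum = (l'.map (min k)).sum) : l = l' := by
  have hcountP : ∀ k, l.countP (k < ·) = l'.countP (k < ·) := fun k => by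
    have := sum_map_min_succ l k
    have := sum_map_min_succ l' k
    have := h k
    have := h (k + 1)
    omega
  refine List.Perm.eq_of_sortedGE hl hl' (List.perm_iff_count.2 fun v => ?_)
  cases v with
  | zero => rw [List.count_eq_zero.2 h0, List.count_eq_zero.2 h0']
  | succ v =>
    have := countP_lt_eq_countP_succ_lt_add_count l v
    have := countP_lt_eq_countP_succ_lt_add_count l' v
    have := hcountP v
    have := hcountP (v + 1)
    omega

theorem sortedGE_map_length {T : List (List ℕ)} (hT : IsSSYT T) : (T.map List.length).SortedGE := by
  rw [List.sortedGE_iff_isChain]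
  induction T with
  | nil => simp
  | cons r rs ih =>
    obtain ⟨-, -, ⟨hlen, -⟩, hrs⟩ := isSSYT_cons_iff.1 hT
    refine List.isChain_cons.2 ⟨fun y hy => ?_, ih hrs⟩
    cases rs <;> simp_all

theorem zero_notMem_map_length {T : List (List ℕ)} (hT : IsSSYT T) : 0 ∉ T.map List.length := by
  simpa using fun h => hT.2.2.2 [] h rfl

theorem sum_min_length_eq_of_hasDecCover_iff {T T' : List (List ℕ)} (hT : IsSSYT T)
    (hT' : IsSSYT T') (k : ℕ)
    (h : ∀ s, HasDecCover (Fin k) s (rowWord T) ↔ HasDecCover (Fin k) s (rowWord T')) :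
    (T.map fun r => min k r.length).sum = (T'.map fun r => min k r.length).sum := by
  have h₁ := ((h _).1 (hasDecCover_rowWord hT k)).le_sum_min_length_rowWord hT'.1
  have h₂ := ((h _).2 (hasDecCover_rowWord hT' k)).le_sum_min_length_rowWord hT.1
  simp only [Fintype.card_fin] at h₁ h₂
  omega

end Plactic

open Plactic in
theorem stmt_19 (m : ℕ) (T : List (List ℕ)) (hT : IsSSYT T)
    (hentries : ∀ r ∈ T, ∀ x ∈ r, 1 ≤ x ∧ x ≤ m) :
    (evac m T).map List.length = T.map List.length := by
  have hw : ∀ t ∈ rowWord T, t ≤ m := by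
    simp only [rowWord, List.mem_flatten, List.mem_reverse]
    rintro t ⟨r, hr, ht⟩
    exact (hentries r hr t ht).2
  have hE : IsSSYT (evac m T) := isSSYT_P _
  have hcover : ∀ k s, HasDecCover (Fin k) s (rowWord (evac m T)) ↔
      HasDecCover (Fin k) s (rowWord T) := fun k s =>
    (HasDecCover.iff_of_kEquiv (kEquiv_rowWord_P _)).trans (hasDecCover_RC_iff hw)
  refine eq_of_sum_map_min_eq (sortedGE_map_length hE) (sortedGE_map_length hT)
    (zero_notMem_map_length hE) (zero_notMem_map_length hT) fun k => ?_
  simpa [List.map_map, Function.comp_def] using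
    sum_min_length_eq_of_hasDecCover_iff hE hT k (hcover k)
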